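/- Let S be an inverse semigroup with zero and let s, t ∈ S be such that s⋆ * s = t⋆ * t and λ_s(ξ) = λ_t(ξ) for every ultrafilter ξ ∈ Ω_{s⋆ * s}. Then s ≡ t. -/
import Mathlib

/-- An inverse semigroup with zero: every element `s` has a unique generalized
inverse `star s`, and `0` is absorbing. -/
class InverseSemigroupWithZero (S : Type*) extends Semigroup S, Zero S, Star S where
  zero_mul : ∀ s : S, 0 * s = 0
  mul_zero : ∀ s : S, s * 0 = 0
  mul_star_mul_self : ∀ s : S, s * star s * s = s
  star_mul_self_star : ∀ s : S, star s * s * star s = star s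
  star_unique : ∀ s x : S, s * x * s = s → x * s * x = x → x = star s

variable {S : Type*} [InverseSemigroupWithZero S]

/-- The natural partial order on an inverse semigroup: `s ≤ t` iff `t * s⋆ * s = s`. -/
def natLe (s t : S) : Prop := t * star s * s = s

/-- A filter in the inverse semigroup `S` (w.r.t. the natural partial order). -/
def IsFilterS (ξ : Set S) : Prop :=
  ξ.Nonempty ∧ (0 : S) ∉ ξ ∧
    (∀ x ∈ ξ, ∀ y : S, natLe x y → y ∈ ξ) ∧
    ∀ x ∈ ξ, ∀ y ∈ ξ, ∃ z ∈ ξ, natLe z x ∧ natLe z y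

/-- An ultrafilter: a filter maximal under inclusion. -/
def IsUltraS (ξ : Set S) : Prop :=
  IsFilterS ξ ∧ ∀ η : Set S, IsFilterS η → ξ ⊆ η → η = ξ

/-- The set `Ω` of all ultrafilters in `S`. -/
def OmegaAll (S : Type*) [InverseSemigroupWithZero S] : Set (Set S) := {ξ | IsUltraS ξ}

/-- `Ω_e`: the set of ultrafilters `ξ` with `eξ ⊆ ξ`. -/
def OmegaE (e : S) : Set (Set S) := {ξ | IsUltraS ξ ∧ ∀ t ∈ ξ, e * t ∈ ξ}

/-- The map `λₛ` on filters. -/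
def lambdaMap (s : S) (ξ : Set S) : Set S := {u | ∃ t ∈ ξ, natLe (s * t) u}

/-- `y` is dense in `x` (for idempotents `y ≤ x`): there is no nonzero idempotent
`z ≤ x` with `z * y = 0`. -/
def DenseIn (y x : S) : Prop :=
  ∀ z : S, IsIdempotentElem z → z * x = z → z * y = 0 → z = 0

/-- `s` essentially coincides with `t`. -/
def EssEq (s t : S) : Prop :=
  star s * s = star t * t ∧
    ∀ f : S, IsIdempotentElem f → f ≠ 0 → f * (star s * s) = f →
      ∃ e : S, IsIdempotentElem e ∧ e ≠ 0 ∧ e * f = e ∧ s * e = t * e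

section Aux

open InverseSemigroupWithZero

lemma isw_A (s : S) : s * (star s * s) = s := by rw [← mul_assoc]; exact mul_star_mul_self s

lemma isw_B (s : S) : star s * (s * star s) = star s := by
  rw [← mul_assoc]; exact star_mul_self_star s

lemma isw_star_idem {e : S} (he : IsIdempotentElem e) : star e = e :=
  (star_unique e e (by rw [he.eq, he.eq]) (by rw [he.eq, he.eq])).symm

lemma isw_star_star (s : S) : star (star s) = s :=
  (star_unique (star s) s (star_mul_self_star s) (mul_star_mul_self s)).symm

lemma isw_idem_star_mul_self (s : S) : IsIdempotentElem (star s * s) := by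
  show star s * s * (star s * s) = star s * s
  rw [mul_assoc, isw_A]

lemma isw_idem_mul_star (s : S) : IsIdempotentElem (s * star s) := by
  show s * star s * (s * star s) = s * star s
  rw [mul_assoc, isw_B]

lemma isw_cancel {e : S} (he : IsIdempotentElem e) (x : S) : e * (e * x) = e * x := by
  rw [← mul_assoc, he.eq]

lemma isw_idem_mul {e f : S} (he : IsIdempotentElem e) (hf : IsIdempotentElem f) :
    IsIdempotentElem (e * f) := by
  set x := star (e * f) with hx
  have h2 : x * (e * f) * x = x := star_mul_self_star (e * f)
  have h2' : ∀ y : S, x * (e * (f * (x * y))) = x * y := by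
    intro y
    have := congrArg (· * y) h2
    simp only [mul_assoc] at this
    exact this
  have g1 : (e * f) * (f * x * e) * (e * f) = e * f := by
    have h1 := mul_star_mul_self (e * f)
    simp only [mul_assoc] at h1 ⊢
    rw [isw_cancel hf, isw_cancel he]
    exact h1
  have g2 : (f * x * e) * (e * f) * (f * x * e) = f * x * e := by
    simp only [mul_assoc]
    rw [isw_cancel he, isw_cancel hf, h2' e]
  have hstar_eq : star (e * f) = f * x * e := (star_unique _ _ g1 g2).symm
  have hfxe : IsIdempotentElem (f * x * e) := by
    show (f * x * e) * (f * x * e) = f * x * e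
    simp only [mul_assoc]
    rw [h2' e]
  have hidem : IsIdempotentElem (star (e * f)) := by rw [hstar_eq]; exact hfxe
  have heq : e * f = star (e * f) := by
    conv_lhs => rw [← isw_star_star (e * f)]
    rw [isw_star_idem hidem]
  show (e * f) * (e * f) = e * f
  rw [heq]
  exact hidem.eq

lemma isw_idem_comm {e f : S} (he : IsIdempotentElem e) (hf : IsIdempotentElem f) :
    e * f = f * e := by
  have hef := isw_idem_mul he hf
  have hfe := isw_idem_mul hf he
  have hef' : e * (f * (e * f)) = e * f := by
    have := hef.eq; simp only [mul_assoc] at this; exact this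
  have hfe' : f * (e * (f * e)) = f * e := by
    have := hfe.eq; simp only [mul_assoc] at this; exact this
  have g1 : (e * f) * (f * e) * (e * f) = e * f := by
    simp only [mul_assoc]
    rw [isw_cancel hf, isw_cancel he]
    exact hef'
  have g2 : (f * e) * (e * f) * (f * e) = f * e := by
    simp only [mul_assoc]
    rw [isw_cancel he, isw_cancel hf]
    exact hfe'
  have h3 : f * e = star (e * f) := star_unique _ _ g1 g2
  rw [h3, isw_star_idem hef]

lemma isw_star_mul (a b : S) : star (a * b) = star b * star a := by
  have h1 : (a * b) * (star b * star a) * (a * b) = a * b := by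
    have hc := isw_idem_comm (isw_idem_mul_star b) (isw_idem_star_mul_self a)
    calc (a * b) * (star b * star a) * (a * b)
        = a * ((b * star b) * (star a * a)) * b := by simp only [mul_assoc]
      _ = a * ((star a * a) * (b * star b)) * b := by rw [hc]
      _ = (a * star a * a) * (b * star b * b) := by simp only [mul_assoc]
      _ = a * b := by rw [mul_star_mul_self, mul_star_mul_self]
  have h2 : (star b * star a) * (a * b) * (star b * star a) = star b * star a := by
    have hc := isw_idem_comm (isw_idem_star_mul_self a) (isw_idem_mul_star b)
    calc (star b * star a) * (a * b) * (star b * star a)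
        = star b * ((star a * a) * (b * star b)) * star a := by simp only [mul_assoc]
      _ = star b * ((b * star b) * (star a * a)) * star a := by rw [hc]
      _ = (star b * b * star b) * (star a * a * star a) := by simp only [mul_assoc]
      _ = star b * star a := by rw [star_mul_self_star, star_mul_self_star]
  exact (star_unique _ _ h1 h2).symm

lemma isw_natLe_refl (x : S) : natLe x x := mul_star_mul_self x

lemma isw_natLe_trans {x y z : S} (h1 : natLe x y) (h2 : natLe y z) : natLe x z := by
  have hgi : IsIdempotentElem (star x * x) := isw_idem_star_mul_self x
  have hki : IsIdempotentElem (star y * y) := isw_idem_star_mul_self y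
  have hx : y * (star x * x) = x := by rw [← mul_assoc]; exact h1
  have key : star x * x = star x * x * (star y * y) := by
    calc star x * x = star (y * (star x * x)) * (y * (star x * x)) := by rw [hx]
      _ = (star (star x * x) * star y) * (y * (star x * x)) := by rw [isw_star_mul]
      _ = ((star x * x) * star y) * (y * (star x * x)) := by rw [isw_star_idem hgi]
      _ = (star x * x) * ((star y * y) * (star x * x)) := by simp only [mul_assoc]
      _ = (star x * x) * ((star x * x) * (star y * y)) := by rw [isw_idem_comm hki hgi]
      _ = ((star x * x) * (star x * x)) * (star y * y) := by simp only [mul_assoc]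
      _ = star x * x * (star y * y) := by rw [hgi.eq]
  show z * star x * x = x
  calc z * star x * x
      = z * (star x * x * (star y * y)) := by conv_lhs => rw [mul_assoc, key]
    _ = z * ((star y * y) * (star x * x)) := by rw [isw_idem_comm hgi hki]
    _ = (z * star y * y) * (star x * x) := by simp only [mul_assoc]
    _ = y * (star x * x) := by rw [h2]
    _ = x := hx

end Aux

theorem essEq_of_lambdaMap_eq (s t : S) (hst : star s * s = star t * t)
    (h : ∀ ξ ∈ OmegaE (star s * s), lambdaMap s ξ = lambdaMap t ξ) :
    EssEq s t := by
  refine ⟨hst, ?_⟩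
  intro f hf hf0 hfe
  have hE : IsIdempotentElem (star s * s) := isw_idem_star_mul_self s
  have hEf : (star s * s) * f = f := by rw [isw_idem_comm hE hf]; exact hfe
  -- the principal filter at f
  have hPfilter : IsFilterS {x : S | natLe f x} := by
    refine ⟨⟨f, isw_natLe_refl f⟩, ?_, ?_, ?_⟩
    · intro h0
      exact hf0 (by rw [← h0, InverseSemigroupWithZero.zero_mul,
        InverseSemigroupWithZero.zero_mul])
    · intro x hx y hxy
      exact isw_natLe_trans hx hxy
    · intro x hx y hy
      exact ⟨f, isw_natLe_refl f, hx, hy⟩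
  -- Zorn: extend to a maximal filter
  have hzorn : ∀ c ⊆ {η : Set S | IsFilterS η}, IsChain (· ⊆ ·) c → c.Nonempty →
      ∃ ub ∈ {η : Set S | IsFilterS η}, ∀ r ∈ c, r ⊆ ub := by
    intro c hcsub hchain hcne
    refine ⟨⋃₀ c, ?_, fun r hr => Set.subset_sUnion_of_mem hr⟩
    obtain ⟨η₀, hη₀⟩ := hcne
    refine ⟨?_, ?_, ?_, ?_⟩
    · obtain ⟨a, ha⟩ := (hcsub hη₀).1
      exact ⟨a, η₀, hη₀, ha⟩
    · rintro ⟨η, hη, h0⟩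
      exact (hcsub hη).2.1 h0
    · rintro x ⟨η, hη, hx⟩ y hxy
      exact ⟨η, hη, (hcsub hη).2.2.1 x hx y hxy⟩
    · rintro x ⟨η₁, hη₁, hx⟩ y ⟨η₂, hη₂, hy⟩
      rcases hchain.total hη₁ hη₂ with hsub | hsub
      · obtain ⟨z, hz, hzx, hzy⟩ := (hcsub hη₂).2.2.2 x (hsub hx) y hy
        exact ⟨z, ⟨η₂, hη₂, hz⟩, hzx, hzy⟩
      · obtain ⟨z, hz, hzx, hzy⟩ := (hcsub hη₁).2.2.2 x hx y (hsub hy)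
        exact ⟨z, ⟨η₁, hη₁, hz⟩, hzx, hzy⟩
  obtain ⟨ξ, hPξ, hmax⟩ := zorn_subset_nonempty {η : Set S | IsFilterS η} hzorn _ hPfilter
  have hξf : IsFilterS ξ := hmax.prop
  have hultra : IsUltraS ξ := ⟨hξf, fun η hη hsub => subset_antisymm (hmax.2 hη hsub) hsub⟩
  have hfξ : f ∈ ξ := hPξ (isw_natLe_refl f)
  -- helper: (s⋆s) z = z for z ≤ f in ξ
  have habs : ∀ z : S, natLe z f → (star s * s) * z = z := by
    intro z hzf
    have hz' : f * (star z * z) = z := by rw [← mul_assoc]; exact hzf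
    calc (star s * s) * z = (star s * s) * (f * (star z * z)) := by rw [hz']
      _ = ((star s * s) * f) * (star z * z) := by rw [← mul_assoc]
      _ = f * (star z * z) := by rw [hEf]
      _ = z := hz'
  -- ξ ∈ Ω_{s⋆s}
  have hΩ : ξ ∈ OmegaE (star s * s) := by
    refine ⟨hultra, ?_⟩
    intro x hx
    obtain ⟨z, hz, hzf, hzx⟩ := hξf.2.2.2 f hfξ x hx
    have hle : natLe z ((star s * s) * x) := by
      show (star s * s * x) * star z * z = z
      calc (star s * s * x) * star z * z
          = (star s * s) * (x * star z * z) := by simp only [mul_assoc]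
        _ = (star s * s) * z := by
            have hzx' : x * star z * z = z := hzx
            rw [hzx']
        _ = z := habs z hzf
    exact hξf.2.2.1 z hz _ hle
  -- use λ_s ξ = λ_t ξ
  have hsf : s * f ∈ lambdaMap t ξ := by
    rw [← h ξ hΩ]
    exact ⟨f, hfξ, isw_natLe_refl (s * f)⟩
  obtain ⟨u, huξ, htu⟩ := hsf
  obtain ⟨z, hzξ, hzf, hzu⟩ := hξf.2.2.2 f hfξ u huξ
  have hz0 : z ≠ 0 := fun h0 => hξf.2.1 (h0 ▸ hzξ)
  have hz1 : f * (star z * z) = z := by rw [← mul_assoc]; exact hzf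
  have hzi : IsIdempotentElem z := by
    rw [← hz1]; exact isw_idem_mul hf (isw_idem_star_mul_self z)
  have hzstar : star z = z := isw_star_idem hzi
  have hfz : f * z = z := by rw [hzstar, hzi.eq] at hz1; exact hz1
  have huz : u * z = z := by
    have hzu' : u * star z * z = z := hzu
    rw [hzstar, mul_assoc, hzi.eq] at hzu'; exact hzu'
  set q : S := star (t * u) * (t * u) with hq_def
  have hq : IsIdempotentElem q := isw_idem_star_mul_self (t * u)
  have htu' : s * (f * q) = t * u := by
    have := htu
    show _ = _
    simp only [natLe, mul_assoc] at this
    simp only [mul_assoc, hq_def]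
    exact this
  have key : t * z = s * (z * q) := by
    calc t * z = t * (u * z) := by rw [huz]
      _ = (t * u) * z := by rw [← mul_assoc]
      _ = s * (f * q) * z := by rw [htu']
      _ = s * (f * (q * z)) := by simp only [mul_assoc]
      _ = s * (f * (z * q)) := by rw [isw_idem_comm hq hzi]
      _ = s * ((f * z) * q) := by simp only [mul_assoc]
      _ = s * (z * q) := by rw [hfz]
  have key2 : t * (z * q) = s * (z * q) := by
    calc t * (z * q) = (t * z) * q := by rw [← mul_assoc]
      _ = (s * (z * q)) * q := by rw [key]
      _ = s * (z * (q * q)) := by simp only [mul_assoc]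
      _ = s * (z * q) := by rw [hq.eq]
  have hEz : (star s * s) * z = z := habs z hzf
  have hz_eq : star (t * z) * (t * z) = z := by
    calc star (t * z) * (t * z) = (star z * star t) * (t * z) := by rw [isw_star_mul]
      _ = star z * ((star t * t) * z) := by simp only [mul_assoc]
      _ = z * ((star s * s) * z) := by rw [hzstar, ← hst]
      _ = z * z := by rw [hEz]
      _ = z := hzi.eq
  refine ⟨z * q, isw_idem_mul hzi hq, ?_, ?_, key2.symm⟩
  · intro h0
    have h1 : t * z = 0 := by rw [key, h0, InverseSemigroupWithZero.mul_zero]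
    have h2 : z = 0 := by
      rw [← hz_eq, h1, InverseSemigroupWithZero.mul_zero]
    exact hz0 h2
  · -- (z*q)*f = z*q
    calc (z * q) * f = z * (q * f) := by rw [mul_assoc]
      _ = z * (f * q) := by rw [isw_idem_comm hq hf]
      _ = (z * f) * q := by rw [← mul_assoc]
      _ = (f * z) * q := by rw [isw_idem_comm hzi hf]
      _ = z * q := by rw [hfz]
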